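/- For every real parameter p > 0 and every equilibrium x of the IDMDE vector field, the eigenvalues (over ℂ) of the Jacobian matrix J(x) are exactly σ₁ = −2 and the purely imaginary conjugate pair σ₂,₃ = ± i·(p²+4)^{1/4}; in particular one eigenvalue is the real constant −2 (independent of p) and the other two have zero real part. -/

import Mathlib

/-- The IDMDE vector field with parameter `p`. -/
def idmde (p : ℝ) (x : ℝ × ℝ × ℝ) : ℝ × ℝ × ℝ :=
  (x.2.1 * x.2.2 - x.1, (x.2.2 - p) * x.1 - x.2.1, 1 - x.1 * x.2.1)

/-- The Jacobian matrix of the IDMDE vector field with parameter `p` at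
`x = (x₁,x₂,x₃)`, regarded as a complex 3×3 matrix. -/
def idmdeJacobianC (p : ℝ) (x : ℝ × ℝ × ℝ) : Matrix (Fin 3) (Fin 3) ℂ :=
  !![-1, (x.2.2 : ℂ), (x.2.1 : ℂ);
     ((x.2.2 - p : ℝ) : ℂ), -1, (x.1 : ℂ);
     (-x.2.1 : ℝ), (-x.1 : ℝ), 0]

/-!
At an equilibrium `(a, b, c)` the three equations `b c = a`, `(c - p) a = b`, `a b = 1` give
`a² = c`, `b² = c - p` and `c (c - p) = 1`. Substituting these into the characteristic polynomial
`σ³ + 2σ² + (1 + a² + b² - c (c - p)) σ + a² + b² + a b (2c - p)` of `J` collapses it to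
`(σ + 2) (σ² + s)` with `s = 2c - p`. Since `s² = p² + 4` and `s = c + (c - p) > 0`, we get
`s = √(p² + 4)`, so the roots are `-2` and `± i (p² + 4)^{1/4}`.
-/

open Complex

theorem Matrix.spectrum_eq_of_eval_charpoly {n K : Type*} [Fintype n] [DecidableEq n] [Field K]
    {A : Matrix n n K} {a b c : K}
    (h : ∀ σ, A.charpoly.eval σ = (σ - a) * (σ - b) * (σ - c)) :
    spectrum K A = {a, b, c} := by
  ext σ
  simp [Matrix.mem_spectrum_iff_isRoot_charpoly, h, sub_eq_zero, or_assoc]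

theorem Real.rpow_one_div_four_sq {y : ℝ} (hy : 0 ≤ y) : (y ^ ((1 : ℝ) / 4)) ^ 2 = √y := by
  rw [← Real.rpow_natCast, ← Real.rpow_mul hy, Real.sqrt_eq_rpow]
  norm_num

theorem idmde_eq_zero_iff {p : ℝ} {x : ℝ × ℝ × ℝ} :
    idmde p x = 0 ↔ x.2.1 * x.2.2 = x.1 ∧ (x.2.2 - p) * x.1 = x.2.1 ∧ x.1 * x.2.1 = 1 := by
  simp only [idmde, Prod.ext_iff, Prod.fst_zero, Prod.snd_zero, sub_eq_zero, eq_comm (b := (1 : ℝ))]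

theorem eval_charpoly_idmdeJacobianC (p : ℝ) (x : ℝ × ℝ × ℝ) (σ : ℂ) :
    (idmdeJacobianC p x).charpoly.eval σ =
      σ ^ 3 + 2 * σ ^ 2 + (1 + x.1 ^ 2 + x.2.1 ^ 2 - x.2.2 * (x.2.2 - p)) * σ
        + (x.1 ^ 2 + x.2.1 ^ 2 + x.1 * x.2.1 * (2 * x.2.2 - p)) := by
  rw [Matrix.eval_charpoly, Matrix.det_fin_three]
  simp only [idmdeJacobianC, Matrix.scalar_apply, Matrix.sub_apply, Matrix.diagonal_apply,
    Matrix.of_apply, Matrix.cons_val', Matrix.cons_val, Matrix.cons_val_fin_one, ofReal_sub,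
    ofReal_neg, Fin.reduceEq, if_false, if_true]
  ring

section Equilibrium

variable {p : ℝ} {x : ℝ × ℝ × ℝ} (hx : idmde p x = 0)
include hx

theorem fst_sq_of_idmde_eq_zero : x.1 ^ 2 = x.2.2 := by
  obtain ⟨hbc, -, hab⟩ := idmde_eq_zero_iff.1 hx
  linear_combination x.1 * hbc.symm + x.2.2 * hab

theorem snd_sq_of_idmde_eq_zero : x.2.1 ^ 2 = x.2.2 - p := by
  obtain ⟨-, hca, hab⟩ := idmde_eq_zero_iff.1 hx
  linear_combination (-x.2.1) * hca + (x.2.2 - p) * hab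

theorem snd_snd_mul_sub_eq_one_of_idmde_eq_zero : x.2.2 * (x.2.2 - p) = 1 := by
  obtain ⟨-, -, hab⟩ := idmde_eq_zero_iff.1 hx
  linear_combination -(x.2.2 - p) * fst_sq_of_idmde_eq_zero hx
    - x.1 ^ 2 * snd_sq_of_idmde_eq_zero hx + (x.1 * x.2.1 + 1) * hab

theorem two_mul_snd_snd_sub_eq_sqrt_of_idmde_eq_zero : 2 * x.2.2 - p = √(p ^ 2 + 4) := by
  have hprod := snd_snd_mul_sub_eq_one_of_idmde_eq_zero hx
  have hc : 0 < x.2.2 := by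
    refine lt_of_le_of_ne (fst_sq_of_idmde_eq_zero hx ▸ sq_nonneg x.1) fun h ↦ ?_
    simp [← h] at hprod
  have hcp : 0 < x.2.2 - p := pos_of_mul_pos_right (hprod ▸ one_pos) hc.le
  rw [show p ^ 2 + 4 = (2 * x.2.2 - p) ^ 2 by linear_combination -4 * hprod,
    Real.sqrt_sq (by linarith)]

end Equilibrium

theorem spectrum_idmdeJacobianC_of_idmde_eq_zero {p : ℝ} {x : ℝ × ℝ × ℝ} (hx : idmde p x = 0) :
    spectrum ℂ (idmdeJacobianC p x) =
      {-2, I * (((p ^ 2 + 4) ^ ((1 : ℝ) / 4) : ℝ) : ℂ),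
        -(I * (((p ^ 2 + 4) ^ ((1 : ℝ) / 4) : ℝ) : ℂ))} := by
  refine Matrix.spectrum_eq_of_eval_charpoly fun σ ↦ ?_
  set r : ℝ := (p ^ 2 + 4) ^ ((1 : ℝ) / 4)
  have hr : (r : ℂ) ^ 2 = 2 * x.2.2 - p := by
    exact_mod_cast (Real.rpow_one_div_four_sq (by positivity)).trans
      (two_mul_snd_snd_sub_eq_sqrt_of_idmde_eq_zero hx).symm
  have ha : (x.1 : ℂ) ^ 2 = x.2.2 := by exact_mod_cast fst_sq_of_idmde_eq_zero hx
  have hb : (x.2.1 : ℂ) ^ 2 = x.2.2 - p := by exact_mod_cast snd_sq_of_idmde_eq_zero hx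
  have hc : (x.2.2 : ℂ) * (x.2.2 - p) = 1 := by
    exact_mod_cast snd_snd_mul_sub_eq_one_of_idmde_eq_zero hx
  have hab : (x.1 : ℂ) * x.2.1 = 1 := by exact_mod_cast (idmde_eq_zero_iff.1 hx).2.2
  rw [eval_charpoly_idmdeJacobianC]
  linear_combination (σ + 1) * ha + (σ + 1) * hb + (2 * (x.2.2 : ℂ) - p) * hab - σ * hc
    - (σ + 2) * hr + (σ + 2) * (r : ℂ) ^ 2 * I_sq

theorem idmde_eigenvalues_general (p : ℝ)
    (x : ℝ × ℝ × ℝ) (hx : idmde p x = 0) :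
    spectrum ℂ (idmdeJacobianC p x) =
      {(-2 : ℂ),
       Complex.I * (((p ^ 2 + 4) ^ ((1 : ℝ) / 4) : ℝ) : ℂ),
       -(Complex.I * (((p ^ 2 + 4) ^ ((1 : ℝ) / 4) : ℝ) : ℂ))} ∧
    ((-2 : ℂ) ∈ spectrum ℂ (idmdeJacobianC p x) ∧
      ∀ σ ∈ spectrum ℂ (idmdeJacobianC p x), σ ≠ -2 → σ.re = 0) := by
  have hspec := spectrum_idmdeJacobianC_of_idmde_eq_zero hx
  refine ⟨hspec, by simp [hspec], ?_⟩
  rw [hspec]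
  rintro σ (rfl | rfl | rfl) hne
  · exact absurd rfl hne
  all_goals simp

/-- for every `p > 0` and every equilibrium `x` of the IDMDE vector
field, the eigenvalues over `ℂ` of `J(x)` are exactly `σ₁ = −2` and the purely
imaginary conjugate pair `σ₂,₃ = ± i·(p²+4)^{1/4}`; in particular one eigenvalue
is the real constant `−2` and the other two have zero real part. -/
theorem idmde_eigenvalues (p : ℝ) (hp : 0 < p)
    (x : ℝ × ℝ × ℝ) (hx : idmde p x = 0) :
    spectrum ℂ (idmdeJacobianC p x) =
      {(-2 : ℂ),
       Complex.I * (((p ^ 2 + 4) ^ ((1 : ℝ) / 4) : ℝ) : ℂ),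
       -(Complex.I * (((p ^ 2 + 4) ^ ((1 : ℝ) / 4) : ℝ) : ℂ))} ∧
    ((-2 : ℂ) ∈ spectrum ℂ (idmdeJacobianC p x) ∧
      ∀ σ ∈ spectrum ℂ (idmdeJacobianC p x), σ ≠ -2 → σ.re = 0) :=
  idmde_eigenvalues_general p x hx
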